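/- Let A be a primitive axial algebra of Jordan type η over a field F with char F ≠ 2, generated by a closed set 𝒜 of η-axes. Then A is spanned over F by 𝒜. -/

import Mathlib

/-!
Write `b = c • a + b₀ + b_η` along the eigenspaces of an axis `a`. The Miyamoto involution `τ_a`
fixes `c • a + b₀` and negates `b_η`, so `b - τ_a b = 2 • b_η` and
`a * b = c • a + (η / 2) • (b - τ_a b)`. If `𝒜` is closed, then `τ_a b ∈ 𝒜` for `a, b ∈ 𝒜`,
so the span of `𝒜` is closed under multiplication; being a subalgebra containing `𝒜`, it is all
of `A`. The involution `τ_a` exists because the fusion rules make `A = (A₁ ⊕ A₀) ⊕ A_η` a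
`ℤ/2`-grading of the multiplication.
-/

universe u v

section Prelim

variable (F : Type u) {A : Type v} [Field F] [NonUnitalNonAssocCommRing A]
  [Module F A] [SMulCommClass F A A] [IsScalarTower F A A]

/-- The λ-eigenspace of the adjoint map `ad_a : x ↦ a * x`. -/
def eigSp (a : A) (l : F) : Submodule F A where
  carrier := {x | a * x = l • x}
  add_mem' := by
    intro x y hx hy
    simp only [Set.mem_setOf_eq] at *
    rw [mul_add, hx, hy, smul_add]
  zero_mem' := by simp
  smul_mem' := by
    intro c x hx
    simp only [Set.mem_setOf_eq] at *
    rw [mul_smul_comm, hx, smul_smul, smul_smul, mul_comm]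

/-- `a` is a (primitive) `η`-axis. -/
structure IsAxis (η : F) (a : A) : Prop where
  ne_zero : a ≠ 0
  idem : a * a = a
  decomp : eigSp F a 1 ⊔ eigSp F a 0 ⊔ eigSp F a η = ⊤
  prim : eigSp F a 1 = Submodule.span F {a}
  f11 : ∀ x ∈ eigSp F a 1, ∀ y ∈ eigSp F a 1, x * y ∈ eigSp F a 1
  f00 : ∀ x ∈ eigSp F a 0, ∀ y ∈ eigSp F a 0, x * y ∈ eigSp F a 0
  f10 : ∀ x ∈ eigSp F a 1, ∀ y ∈ eigSp F a 0, x * y = 0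
  fpe : ∀ x ∈ eigSp F a 1 ⊔ eigSp F a 0, ∀ y ∈ eigSp F a η, x * y ∈ eigSp F a η
  fee : ∀ x ∈ eigSp F a η, ∀ y ∈ eigSp F a η, x * y ∈ eigSp F a 1 ⊔ eigSp F a 0

/-- `τ` is the Miyamoto involution of the `η`-axis `a`. -/
structure IsMiyamoto (η : F) (a : A) (τ : A → A) : Prop where
  fixes : ∀ x ∈ eigSp F a 1 ⊔ eigSp F a 0, τ x = x
  negates : ∀ x ∈ eigSp F a η, τ x = -x
  map_add : ∀ x y : A, τ (x + y) = τ x + τ y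
  map_smul : ∀ (c : F) (x : A), τ (c • x) = c • τ x
  map_mul : ∀ x y : A, τ (x * y) = τ x * τ y
  bijective : Function.Bijective τ

/-- `c = φ_a(u)`, the projection of `u` to `F·a` w.r.t. the axis `a`. -/
def IsProjCoeff (η : F) (a u : A) (c : F) : Prop :=
  ∃ u0 ∈ eigSp F a 0, ∃ ue ∈ eigSp F a η, u = c • a + u0 + ue

/-- `e` is an identity element of the subalgebra `N`. -/
def IsIdentOf (N : NonUnitalSubalgebra F A) (e : A) : Prop :=
  e ∈ N ∧ ∀ z ∈ N, e * z = z

/-- `ψ` is an `F`-algebra automorphism of `A`. -/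
structure IsAlgAut (ψ : A → A) : Prop where
  map_add : ∀ x y : A, ψ (x + y) = ψ x + ψ y
  map_smul : ∀ (c : F) (x : A), ψ (c • x) = c • ψ x
  map_mul : ∀ x y : A, ψ (x * y) = ψ x * ψ y
  bijective : Function.Bijective ψ

/-- The graph `Δ_𝒜`: distinct axes are adjacent iff their product is nonzero. -/
def axesGraph (𝒜 : Set A) : SimpleGraph 𝒜 where
  Adj x y := x ≠ y ∧ (x : A) * (y : A) ≠ 0
  symm := ⟨by
    rintro x y ⟨hxy, hm⟩
    exact ⟨hxy.symm, by rwa [mul_comm]⟩⟩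
  loopless := ⟨by rintro x ⟨h, -⟩; exact h rfl⟩

/-- Multiplication of the Jordan algebra of Clifford type `J(V,B) = F·e ⊕ V`. -/
def cliffMul {V : Type*} [AddCommGroup V] [Module F V]
    (B : V →ₗ[F] V →ₗ[F] F) (x y : F × V) : F × V :=
  (x.1 * y.1 + B x.2 y.2, x.1 • y.2 + y.1 • x.2)

end Prelim

/-- An isomorphism of `A` with a Jordan algebra of Clifford type `J(V,B)`. -/
structure CliffordTypeIso (F : Type u) (A : Type v) [Field F]
    [NonUnitalNonAssocCommRing A] [Module F A] [SMulCommClass F A A]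
    [IsScalarTower F A A] where
  V : Type v
  [instAdd : AddCommGroup V]
  [instMod : Module F V]
  B : V →ₗ[F] V →ₗ[F] F
  symm : ∀ v w : V, B v w = B w v
  iso : A ≃ₗ[F] F × V
  mul_compat : ∀ x y : A, iso (x * y) = cliffMul F B (iso x) (iso y)
section Parity

variable {R M : Type*} [Ring R] [AddCommGroup M] [Module R M] {N E : Submodule R M}

noncomputable def parityMap (h : IsCompl N E) : M →ₗ[R] M :=
  LinearMap.ofIsCompl h N.subtype (-E.subtype)

theorem parityMap_of_mem_left {n : M} (h : IsCompl N E) (hn : n ∈ N) : parityMap h n = n :=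
  LinearMap.ofIsCompl_apply_left h ⟨n, hn⟩

theorem parityMap_of_mem_right {e : M} (h : IsCompl N E) (he : e ∈ E) : parityMap h e = -e :=
  LinearMap.ofIsCompl_apply_right h ⟨e, he⟩

theorem parityMap_add {n e : M} (h : IsCompl N E) (hn : n ∈ N) (he : e ∈ E) :
    parityMap h (n + e) = n - e := by
  rw [map_add, parityMap_of_mem_left h hn, parityMap_of_mem_right h he, sub_eq_add_neg]

theorem parityMap_involutive (h : IsCompl N E) : Function.Involutive (parityMap h) := by
  intro x
  obtain ⟨n, e, hn, he, rfl⟩ := Submodule.codisjoint_iff_exists_add_eq.mp h.codisjoint x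
  rw [parityMap_add h hn he, sub_eq_add_neg, parityMap_add h hn (neg_mem he), sub_neg_eq_add]

theorem parityMap_mul {A : Type*} [NonUnitalNonAssocCommRing A] [Module R A]
    {N E : Submodule R A} (h : IsCompl N E) (hNN : ∀ x ∈ N, ∀ y ∈ N, x * y ∈ N)
    (hNE : ∀ x ∈ N, ∀ y ∈ E, x * y ∈ E) (hEE : ∀ x ∈ E, ∀ y ∈ E, x * y ∈ N) (x y : A) :
    parityMap h (x * y) = parityMap h x * parityMap h y := by
  obtain ⟨n, e, hn, he, rfl⟩ := Submodule.codisjoint_iff_exists_add_eq.mp h.codisjoint x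
  obtain ⟨n', e', hn', he', rfl⟩ := Submodule.codisjoint_iff_exists_add_eq.mp h.codisjoint y
  have hexp : (n + e) * (n' + e') = (n * n' + e * e') + (n * e' + n' * e) := by
    rw [add_mul, mul_add, mul_add, mul_comm e n']; abel
  rw [hexp, parityMap_add h (add_mem (hNN n hn n' hn') (hEE e he e' he'))
    (add_mem (hNE n hn e' he') (hNE n' hn' e he)), parityMap_add h hn he, parityMap_add h hn' he',
    sub_mul, mul_sub, mul_sub, mul_comm e n']
  abel

end Parity

theorem Submodule.span_eq_top_of_mul_mem {R : Type*} {A : Type*} [CommSemiring R]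
    [NonUnitalNonAssocSemiring A] [Module R A] [SMulCommClass R A A] [IsScalarTower R A A]
    {S : Set A} (hgen : NonUnitalAlgebra.adjoin R S = ⊤)
    (hmul : ∀ a ∈ S, ∀ b ∈ S, a * b ∈ span R S) : span R S = ⊤ := by
  have hclosed (x y : A) (hx : x ∈ span R S) (hy : y ∈ span R S) : x * y ∈ span R S := by
    have hxy := apply_mem_map₂ (LinearMap.mul R A) hx hy
    rw [map₂_span_span] at hxy
    exact span_le.mpr (Set.image2_subset_iff.mpr hmul) hxy
  have hle := NonUnitalAlgebra.adjoin_le (S := (span R S).toNonUnitalSubalgebra hclosed)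
    subset_span
  rw [hgen] at hle
  exact eq_top_iff.mpr fun x _ => hle trivial

section Axes

variable {F : Type u} {A : Type v} [Field F] [NonUnitalNonAssocCommRing A] [Module F A]
  [SMulCommClass F A A] {η : F} {a : A}

theorem eigSp_eq_eigenspace (l : F) :
    eigSp F a l = Module.End.eigenspace (LinearMap.mulLeft F a) l := by
  ext x
  rw [Module.End.mem_eigenspace_iff]
  rfl

theorem IsAxis.isCompl_eigSp (ha : IsAxis F η a) (hη0 : η ≠ 0) (hη1 : η ≠ 1) :
    IsCompl (eigSp F a 1 ⊔ eigSp F a 0) (eigSp F a η) := by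
  refine ⟨?_, codisjoint_iff.mpr ha.decomp⟩
  simp only [eigSp_eq_eigenspace]
  refine ((Module.End.eigenspaces_iSupIndep (LinearMap.mulLeft F a)) η).symm.mono_left
    (sup_le ?_ ?_)
  · exact le_iSup₂_of_le (f := fun j (_ : j ≠ η) => _) 1 hη1.symm le_rfl
  · exact le_iSup₂_of_le (f := fun j (_ : j ≠ η) => _) 0 hη0.symm le_rfl

theorem IsAxis.mul_mem_eigSp_one_sup_zero (ha : IsAxis F η a) {x y : A}
    (hx : x ∈ eigSp F a 1 ⊔ eigSp F a 0) (hy : y ∈ eigSp F a 1 ⊔ eigSp F a 0) :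
    x * y ∈ eigSp F a 1 ⊔ eigSp F a 0 := by
  obtain ⟨x₁, hx₁, x₀, hx₀, rfl⟩ := Submodule.mem_sup.mp hx
  obtain ⟨y₁, hy₁, y₀, hy₀, rfl⟩ := Submodule.mem_sup.mp hy
  have hexp : (x₁ + x₀) * (y₁ + y₀) = x₁ * y₁ + x₀ * y₀ := by
    rw [add_mul, mul_add, mul_add, ha.f10 x₁ hx₁ y₀ hy₀, mul_comm x₀, ha.f10 y₁ hy₁ x₀ hx₀]
    abel
  rw [hexp]
  exact add_mem (Submodule.mem_sup_left (ha.f11 x₁ hx₁ y₁ hy₁))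
    (Submodule.mem_sup_right (ha.f00 x₀ hx₀ y₀ hy₀))

theorem IsAxis.exists_isMiyamoto (ha : IsAxis F η a) (hη0 : η ≠ 0) (hη1 : η ≠ 1) :
    ∃ τ : A → A, IsMiyamoto F η a τ := by
  have h := ha.isCompl_eigSp hη0 hη1
  refine ⟨parityMap h, fun x hx => parityMap_of_mem_left h hx,
    fun x hx => parityMap_of_mem_right h hx, map_add _, map_smul _,
    parityMap_mul h (fun _ hx _ hy => ha.mul_mem_eigSp_one_sup_zero hx hy) ha.fpe ha.fee,
    (parityMap_involutive h).bijective⟩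

theorem IsAxis.mul_mem_span_miyamoto (ha : IsAxis F η a) (hchar : (2 : F) ≠ 0) {τ : A → A}
    (hτ : IsMiyamoto F η a τ) (b : A) : a * b ∈ Submodule.span F {a, b, τ b} := by
  have hb : b ∈ eigSp F a 1 ⊔ eigSp F a 0 ⊔ eigSp F a η := ha.decomp ▸ Submodule.mem_top
  obtain ⟨n, hn, e, he, rfl⟩ := Submodule.mem_sup.mp hb
  obtain ⟨y, hy, z, hz, rfl⟩ := Submodule.mem_sup.mp hn
  obtain ⟨c, rfl⟩ := Submodule.mem_span_singleton.mp (ha.prim ▸ hy)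
  have hτb : τ (c • a + z + e) = c • a + z - e := by
    rw [hτ.map_add, hτ.fixes _ hn, hτ.negates _ he, sub_eq_add_neg]
  have h2ab : (2 : F) • (a * (c • a + z + e)) =
      ((2 : F) * c) • a + η • (c • a + z + e - τ (c • a + z + e)) := by
    rw [hτb, mul_add, mul_add, mul_smul_comm, ha.idem, he, hz]
    module
  refine (Submodule.smul_mem_iff _ hchar).mp (h2ab ▸ add_mem ?_ ?_)
  · exact Submodule.smul_mem _ _ (Submodule.subset_span (by simp))
  · exact Submodule.smul_mem _ _
      (sub_mem (Submodule.subset_span (by simp)) (Submodule.subset_span (by simp)))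

end Axes

/-- A primitive axial algebra of Jordan type `η` generated by a
closed set `𝒜` of `η`-axes is spanned (as an `F`-vector space) by `𝒜`. -/
theorem spanned_by_closed_set_of_axes
    {F : Type u} {A : Type v} [Field F] [NonUnitalNonAssocCommRing A]
    [Module F A] [SMulCommClass F A A] [IsScalarTower F A A]
    (hchar : (2 : F) ≠ 0) (η : F) (hη0 : η ≠ 0) (hη1 : η ≠ 1)
    (𝒜 : Set A) (h𝒜 : ∀ a ∈ 𝒜, IsAxis F η a)
    (hgen : NonUnitalAlgebra.adjoin F 𝒜 = ⊤)
    (hclosed : ∀ a ∈ 𝒜, ∀ b ∈ 𝒜, ∀ τ : A → A, IsMiyamoto F η b τ → τ a ∈ 𝒜) :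
    Submodule.span F 𝒜 = ⊤ := by
  refine Submodule.span_eq_top_of_mul_mem hgen fun a ha b hb => ?_
  obtain ⟨τ, hτ⟩ := (h𝒜 a ha).exists_isMiyamoto hη0 hη1
  refine Submodule.span_mono ?_ ((h𝒜 a ha).mul_mem_span_miyamoto hchar hτ b)
  exact Set.insert_subset ha (Set.insert_subset hb (Set.singleton_subset_iff.mpr
    (hclosed b hb a ha τ hτ)))
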